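/- arXiv:1210.5541 — 4 statements merged into one kernel-verified Lean document; each statement's English description precedes it below -/
import Mathlib

section
/- Let $\alpha, \beta > 0$ and $d_+ > s_-$. Define $A(x)$ and $B_c(x)$ as the explicit quadratic functions of the linear-supply-demand Bayesian Nash equilibrium (with $\gamma = \sqrt{\beta}/(\sqrt{\alpha}+\sqrt{\beta})$). Then for all $x$ in $(a_-, b_+)$, the pair $(A, B_c)$ satisfies the consistency equation $B_c(x)(d_+ - \beta B_c(x) - x) = A(x)(x - s_- - \alpha A(x))$. -/
/-!
Write `a = √α`, `b = √β`, `u = d₊ - x`, `v = x - s₋`, and let `L` be the common factor of `A` and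
`B_c`. Since `α = a²` and `β = b²`, the consistency equation reads `B_c u - A v = (b B_c - a A)(b B_c + a A)`,
which in the variables `P = b B_c + a A`, `M = b B_c - a A` is `P (a u - b v) + M (a u + b v) = 2ab P M`.
For `γ = b / (a + b)` the prefactors of `A` and `B_c` combine to `P = L / (a + b)` and
`M = (a u - b v) L / (ab (u + v))`, and the equation collapses to `2ab L = ab (u + v) + (a + b)(a u + b v)`,
which is the definition of `L`.
-/

theorem consistency_of_sum_diff {a b u v P M : ℝ} (ha : a ≠ 0) (hb : b ≠ 0)
    (h : P * (a * u - b * v) + M * (a * u + b * v) = 2 * a * b * P * M) :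
    (P + M) / (2 * b) * (u - b ^ 2 * ((P + M) / (2 * b))) =
      (P - M) / (2 * a) * (v - a ^ 2 * ((P - M) / (2 * a))) := by
  field_simp
  linear_combination 2 * h

section
variable {a b s d x γ L : ℝ}

theorem sum_of_weighted_prefactors (ha : 0 < a) (hb : 0 < b) (hds : d - s ≠ 0)
    (hγ : γ = b / (a + b)) :
    b * (((1 + γ) * a ^ 2 * (d - x) - (1 - γ) * b ^ 2 * (x - s)) / (2 * b ^ 2 * a ^ 2 * (d - s)) * L)
      + a * ((-γ * a ^ 2 * (d - x) + (2 - γ) * b ^ 2 * (x - s)) / (2 * b ^ 2 * a ^ 2 * (d - s)) * L)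
      = L / (a + b) := by
  subst hγ
  field_simp
  ring

theorem diff_of_weighted_prefactors (ha : 0 < a) (hb : 0 < b) (hds : d - s ≠ 0)
    (hγ : γ = b / (a + b)) :
    b * (((1 + γ) * a ^ 2 * (d - x) - (1 - γ) * b ^ 2 * (x - s)) / (2 * b ^ 2 * a ^ 2 * (d - s)) * L)
      - a * ((-γ * a ^ 2 * (d - x) + (2 - γ) * b ^ 2 * (x - s)) / (2 * b ^ 2 * a ^ 2 * (d - s)) * L)
      = (a * (d - x) - b * (x - s)) * L / (a * b * (d - s)) := by
  subst hγ
  field_simp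
  ring

theorem consistency_eq {A Bc : ℝ} (ha : 0 < a) (hb : 0 < b) (hds : d - s ≠ 0) (hγ : γ = b / (a + b))
    (hL : L = d - s + (a ^ 2 * (d - x) + b ^ 2 * (x - s)) / (2 * (a * b)))
    (hA : A = (-γ * a ^ 2 * (d - x) + (2 - γ) * b ^ 2 * (x - s)) / (2 * b ^ 2 * a ^ 2 * (d - s)) * L)
    (hBc : Bc = ((1 + γ) * a ^ 2 * (d - x) - (1 - γ) * b ^ 2 * (x - s)) /
      (2 * b ^ 2 * a ^ 2 * (d - s)) * L) :
    Bc * (d - b ^ 2 * Bc - x) = A * (x - s - a ^ 2 * A) := by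
  have hP : b * Bc + a * A = L / (a + b) := by
    rw [hA, hBc]; exact sum_of_weighted_prefactors ha hb hds hγ
  have hM : b * Bc - a * A = (a * (d - x) - b * (x - s)) * L / (a * b * (d - s)) := by
    rw [hA, hBc]; exact diff_of_weighted_prefactors ha hb hds hγ
  have key : (b * Bc + a * A) * (a * (d - x) - b * (x - s))
      + (b * Bc - a * A) * (a * (d - x) + b * (x - s))
      = 2 * a * b * (b * Bc + a * A) * (b * Bc - a * A) := by
    rw [hP, hM, hL]
    field_simp
    ring
  have hBc' : (b * Bc + a * A + (b * Bc - a * A)) / (2 * b) = Bc := by field_simp; ring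
  have hA' : (b * Bc + a * A - (b * Bc - a * A)) / (2 * a) = A := by field_simp; ring
  have h := consistency_of_sum_diff ha.ne' hb.ne' key
  rw [hBc', hA'] at h
  linear_combination h

end

theorem stmt9_general (α β sm dp : ℝ) (hα : 0 < α) (hβ : 0 < β) (hsd : sm < dp)
    (γ : ℝ) (hγ : γ = Real.sqrt β / (Real.sqrt α + Real.sqrt β))
    (A Bc : ℝ → ℝ)
    (hA : ∀ x, A x =
      (-γ * α * (dp - x) + (2 - γ) * β * (x - sm)) / (2 * β * α * (dp - sm)) *
        (dp - sm + (α * (dp - x) + β * (x - sm)) / (2 * Real.sqrt (α * β))))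
    (hBc : ∀ x, Bc x =
      ((1 + γ) * α * (dp - x) - (1 - γ) * β * (x - sm)) / (2 * β * α * (dp - sm)) *
        (dp - sm + (α * (dp - x) + β * (x - sm)) / (2 * Real.sqrt (α * β))))
    (x : ℝ) :
    Bc x * (dp - β * Bc x - x) = A x * (x - sm - α * A x) := by
  obtain ⟨a, ha, rfl⟩ : ∃ a, 0 < a ∧ a ^ 2 = α := ⟨√α, Real.sqrt_pos.2 hα, Real.sq_sqrt hα.le⟩
  obtain ⟨b, hb, rfl⟩ : ∃ b, 0 < b ∧ b ^ 2 = β := ⟨√β, Real.sqrt_pos.2 hβ, Real.sq_sqrt hβ.le⟩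
  rw [Real.sqrt_sq ha.le, Real.sqrt_sq hb.le] at hγ
  rw [← mul_pow, Real.sqrt_sq (mul_pos ha hb).le] at hA hBc
  exact consistency_eq ha hb (sub_ne_zero.2 hsd.ne') hγ rfl (hA x) (hBc x)

/-- The explicit BNE distributions `A, B_c` satisfy the consistency equation
`B_c(x)(d₊ - β B_c(x) - x) = A(x)(x - s₋ - α A(x))` on `(a₋, b₊)`. -/
theorem stmt9 (α β sm dp : ℝ) (hα : 0 < α) (hβ : 0 < β) (hsd : sm < dp)
    (γ : ℝ) (hγ : γ = Real.sqrt β / (Real.sqrt α + Real.sqrt β))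
    (A Bc : ℝ → ℝ)
    (hA : ∀ x, A x =
      (-γ * α * (dp - x) + (2 - γ) * β * (x - sm)) / (2 * β * α * (dp - sm)) *
        (dp - sm + (α * (dp - x) + β * (x - sm)) / (2 * Real.sqrt (α * β))))
    (hBc : ∀ x, Bc x =
      ((1 + γ) * α * (dp - x) - (1 - γ) * β * (x - sm)) / (2 * β * α * (dp - sm)) *
        (dp - sm + (α * (dp - x) + β * (x - sm)) / (2 * Real.sqrt (α * β))))
    (am bp : ℝ) (ham : am = sm + (1 - γ) ^ 2 * (dp - sm))
    (hbp : bp = dp - γ ^ 2 * (dp - sm))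
    (x : ℝ) (hx : x ∈ Set.Ioo am bp) :
    Bc x * (dp - β * Bc x - x) = A x * (x - sm - α * A x) :=
  stmt9_general α β sm dp hα hβ hsd γ hγ A Bc hA hBc x
end

section
/- Let $\alpha, \beta > 0$ and $d_+ > s_-$, with $A(x)$ and $B_c(x)$ the explicit BNE distributions for linear supply and demand. Then for all $x \in (a_-, b_+)$, the differential equation $2(d_+ - \beta B_c(x) - x)(-B_c'(x)A(x) + A'(x)B_c(x)) - A(x)(A(x) + B_c(x)) = 0$ holds. -/
/-!
With `s = √α`, `t = √β` (so `√(αβ) = st` and `γ = t / (s + t)`), both distributions share the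
affine factor `Q(x) = d₊ - s₋ + (α(d₊ - x) + β(x - s₋)) / (2st)`: `A = P Q` and `B_c = R Q` with
`P`, `R` affine. Hence `A' B_c - B_c' A = Q² (P' R - R' P)`, and the first-order condition becomes
a rational identity in `s`, `t`, `x`.
-/

open Real

theorem deriv_mul_wronskian_common_factor {𝕜 : Type*} [NontriviallyNormedField 𝕜]
    {P Q R : 𝕜 → 𝕜} {P' R' x : 𝕜} (hP : HasDerivAt P P' x) (hQ : DifferentiableAt 𝕜 Q x)
    (hR : HasDerivAt R R' x) :
    -deriv (fun y => R y * Q y) x * (P x * Q x) + deriv (fun y => P y * Q y) x * (R x * Q x) =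
      Q x ^ 2 * (P' * R x - R' * P x) := by
  rw [(hR.fun_mul hQ.hasDerivAt).deriv, (hP.fun_mul hQ.hasDerivAt).deriv]
  ring

theorem hasDerivAt_linear_interp_div {𝕜 : Type*} [NontriviallyNormedField 𝕜] (a b u v c x : 𝕜) :
    HasDerivAt (fun y => (a * (u - y) + b * (y - v)) / c) ((b - a) / c) x :=
  (((((hasDerivAt_id' x).const_sub u).const_mul a).fun_add
    (((hasDerivAt_id' x).sub_const v).const_mul b)).div_const c).congr_deriv (by ring)

theorem stmt10_general (α β sm dp : ℝ) (hα : 0 < α) (hβ : 0 < β) (hsd : sm < dp)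
    (γ : ℝ) (hγ : γ = Real.sqrt β / (Real.sqrt α + Real.sqrt β))
    (A Bc : ℝ → ℝ)
    (hA : ∀ x, A x =
      (-γ * α * (dp - x) + (2 - γ) * β * (x - sm)) / (2 * β * α * (dp - sm)) *
        (dp - sm + (α * (dp - x) + β * (x - sm)) / (2 * Real.sqrt (α * β))))
    (hBc : ∀ x, Bc x =
      ((1 + γ) * α * (dp - x) - (1 - γ) * β * (x - sm)) / (2 * β * α * (dp - sm)) *
        (dp - sm + (α * (dp - x) + β * (x - sm)) / (2 * Real.sqrt (α * β))))
    (x : ℝ) :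
    2 * (dp - β * Bc x - x) * (-(deriv Bc x) * A x + (deriv A x) * Bc x)
      - A x * (A x + Bc x) = 0 := by
  obtain ⟨s, hs, rfl⟩ : ∃ s, 0 < s ∧ s ^ 2 = α := ⟨√α, sqrt_pos.2 hα, sq_sqrt hα.le⟩
  obtain ⟨t, ht, rfl⟩ : ∃ t, 0 < t ∧ t ^ 2 = β := ⟨√β, sqrt_pos.2 hβ, sq_sqrt hβ.le⟩
  rw [sqrt_sq hs.le, sqrt_sq ht.le] at hγ
  rw [← mul_pow, sqrt_sq (by positivity)] at hA hBc
  set K := 2 * t ^ 2 * s ^ 2 * (dp - sm)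
  set P := fun y => (-γ * s ^ 2 * (dp - y) + (2 - γ) * t ^ 2 * (y - sm)) / K
  set R := fun y => ((1 + γ) * s ^ 2 * (dp - y) + -((1 - γ) * t ^ 2) * (y - sm)) / K
  set Q := fun y => dp - sm + (s ^ 2 * (dp - y) + t ^ 2 * (y - sm)) / (2 * (s * t))
  obtain rfl : A = fun y => P y * Q y := funext hA
  obtain rfl : Bc = fun y => R y * Q y := funext fun y => by rw [hBc]; ring
  rw [deriv_mul_wronskian_common_factor (hasDerivAt_linear_interp_div ..) (by fun_prop)
    (hasDerivAt_linear_interp_div ..)]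
  have hd : dp - sm ≠ 0 := sub_ne_zero.2 hsd.ne'
  subst hγ
  dsimp only [K, P, R, Q]
  clear hA hBc P R Q K
  field_simp
  ring

/-- The explicit BNE distributions `A, B_c` satisfy the first-order condition
`2(d₊ - β B_c - x)(-B_c' A + A' B_c) - A(A + B_c) = 0` on `(a₋, b₊)`. -/
theorem stmt10 (α β sm dp : ℝ) (hα : 0 < α) (hβ : 0 < β) (hsd : sm < dp)
    (γ : ℝ) (hγ : γ = Real.sqrt β / (Real.sqrt α + Real.sqrt β))
    (A Bc : ℝ → ℝ)
    (hA : ∀ x, A x =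
      (-γ * α * (dp - x) + (2 - γ) * β * (x - sm)) / (2 * β * α * (dp - sm)) *
        (dp - sm + (α * (dp - x) + β * (x - sm)) / (2 * Real.sqrt (α * β))))
    (hBc : ∀ x, Bc x =
      ((1 + γ) * α * (dp - x) - (1 - γ) * β * (x - sm)) / (2 * β * α * (dp - sm)) *
        (dp - sm + (α * (dp - x) + β * (x - sm)) / (2 * Real.sqrt (α * β))))
    (am bp : ℝ) (ham : am = sm + (1 - γ) ^ 2 * (dp - sm))
    (hbp : bp = dp - γ ^ 2 * (dp - sm))
    (x : ℝ) (hx : x ∈ Set.Ioo am bp) :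
    2 * (dp - β * Bc x - x) * (-(deriv Bc x) * A x + (deriv A x) * Bc x)
      - A x * (A x + Bc x) = 0 :=
  stmt10_general α β sm dp hα hβ hsd γ hγ A Bc hA hBc x
end

section
/- In the symmetric uniform case, the functions $a(m) = \frac{2}{3}m + \frac{1}{4}$ for $0 \le m \le \frac{3}{4}$ and $b(M) = \frac{2}{3}M + \frac{1}{12}$ for $\frac{1}{4} \le M \le 1$ satisfy: (i) $a(m) > m$ on $[0, 3/4)$ and $b(M) < M$ on $(1/4, 1]$; (ii) $a(3/4) = 3/4$ and $b(1/4) = 1/4$; (iii) the induced distributions $A(x) = S^{-1}(a^{-1}(x)) = \frac{3}{2}(x - \frac{1}{4})$ and $B_c(x) = D^{-1}(b^{-1}(x)) = \frac{3}{2}(\frac{3}{4} - x)$ for $x \in [1/4, 3/4]$ satisfy both $2(d_+ - \beta B_c - x)(-B_c'A + A'B_c) - A(A+B_c) = 0$ and $B_c(1 - B_c - x) = A(x - A)$ with $d_+ = \beta = 1$. -/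
theorem deriv_eq_of_forall_eq_mul_add {f : ℝ → ℝ} {c d : ℝ} (hf : ∀ x, f x = c * x + d) (x : ℝ) :
    deriv f x = c := by
  rw [funext hf]
  exact ((hasDerivAt_id' x).const_mul c |>.add_const d).deriv.trans (mul_one c)

/-- Symmetric uniform case (`S(x)=x`, `D(x)=1-x`): the strategies
`a(m) = 2m/3 + 1/4`, `b(M) = 2M/3 + 1/12` satisfy `a(m) > m`, `b(M) < M`,
`a(3/4) = 3/4`, `b(1/4) = 1/4`, the induced distributions
`A(x) = (3/2)(x - 1/4) = a⁻¹(x)`, `B_c(x) = (3/2)(3/4 - x) = 1 - b⁻¹(x)` satisfy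
the first-order differential equation and the consistency equation (with
`d₊ = β = 1`). -/
theorem stmt14 (a b A Bc : ℝ → ℝ)
    (ha : ∀ m, a m = 2/3 * m + 1/4) (hb : ∀ M, b M = 2/3 * M + 1/12)
    (hA : ∀ x, A x = 3/2 * (x - 1/4)) (hBc : ∀ x, Bc x = 3/2 * (3/4 - x)) :
    (∀ m ∈ Set.Ico (0:ℝ) (3/4), a m > m) ∧
    (∀ M ∈ Set.Ioc (1/4:ℝ) 1, b M < M) ∧
    a (3/4) = 3/4 ∧ b (1/4) = 1/4 ∧
    (∀ x ∈ Set.Icc (1/4:ℝ) (3/4), a (A x) = x) ∧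
    (∀ x ∈ Set.Icc (1/4:ℝ) (3/4), b (1 - Bc x) = x) ∧
    (∀ x ∈ Set.Icc (1/4:ℝ) (3/4),
      2 * ((1:ℝ) - 1 * Bc x - x) * (-(deriv Bc x) * A x + (deriv A x) * Bc x)
        - A x * (A x + Bc x) = 0) ∧
    (∀ x ∈ Set.Icc (1/4:ℝ) (3/4), Bc x * (1 - 1 * Bc x - x) = A x * (x - A x)) := by
  have hA' : ∀ x, deriv A x = 3/2 :=
    deriv_eq_of_forall_eq_mul_add (d := -3/8) fun x => by rw [hA]; ring
  have hBc' : ∀ x, deriv Bc x = -(3/2) :=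
    deriv_eq_of_forall_eq_mul_add (d := 9/8) fun x => by rw [hBc]; ring
  refine ⟨fun m hm => ?_, fun M hM => ?_, ?_, ?_, fun x _ => ?_, fun x _ => ?_,
    fun x _ => ?_, fun x _ => ?_⟩
  · rw [ha]; linarith [hm.2]
  · rw [hb]; linarith [hM.1]
  · rw [ha]; norm_num
  · rw [hb]; norm_num
  · rw [ha, hA]; ring
  · rw [hb, hBc]; ring
  · rw [hA, hBc, hA', hBc']; ring
  · rw [hA, hBc]; ring
end

section
/- Let $A, B_c : [a_-, b_+] \to \mathbb{R}$ be continuously differentiable with $A + B_c > 0$ on $[a_-, b_+]$, $A(a_-) = 0$, and $B_c(b_+) = 0$, and set $T = A/(A + B_c)$. Then $\int_{a_-}^{b_+} B_c'(q)\, T(q)^2\, dq = -\int_{a_-}^{b_+} A'(q)\,(1 - T(q))^2\, dq$. -/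
/-! The function `F = A B_c / (A + B_c) = B_c T = A (1 - T)` has derivative
`A' (1 - T)² + B_c' T²` and vanishes at both endpoints because `A(a₋) = 0` and `B_c(b₊) = 0`,
so the fundamental theorem of calculus gives `∫ (A' (1 - T)² + B_c' T²) = 0`. -/

open Set MeasureTheory intervalIntegral

theorem HasDerivAt.mul_div_add {𝕜 : Type*} [NontriviallyNormedField 𝕜] {f g : 𝕜 → 𝕜}
    {f' g' x : 𝕜} (hf : HasDerivAt f f' x) (hg : HasDerivAt g g' x) (hx : f x + g x ≠ 0) :
    HasDerivAt (fun y => f y * g y / (f y + g y))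
      (f' * (1 - f x / (f x + g x)) ^ 2 + g' * (f x / (f x + g x)) ^ 2) x := by
  refine ((hf.fun_mul hg).fun_div (hf.fun_add hg) hx).congr_deriv ?_
  field_simp
  ring

/-- Integration-by-parts identity: with `T = A/(A+B_c)`, `A(a₋)=0`, `B_c(b₊)=0`,
`∫ B_c' T² = -∫ A' (1-T)²`. -/
theorem stmt15 (am bp : ℝ) (hab : am ≤ bp) (A Bc A' Bc' : ℝ → ℝ)
    (hA : ∀ q ∈ Set.Icc am bp, HasDerivAt A (A' q) q)
    (hBc : ∀ q ∈ Set.Icc am bp, HasDerivAt Bc (Bc' q) q)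
    (hA' : ContinuousOn A' (Set.Icc am bp))
    (hBc' : ContinuousOn Bc' (Set.Icc am bp))
    (hpos : ∀ q ∈ Set.Icc am bp, 0 < A q + Bc q)
    (hA0 : A am = 0) (hB0 : Bc bp = 0) :
    ∫ q in am..bp, Bc' q * (A q / (A q + Bc q)) ^ 2
      = -∫ q in am..bp, A' q * (1 - A q / (A q + Bc q)) ^ 2 := by
  have hT : ContinuousOn (fun q => A q / (A q + Bc q)) (Icc am bp) := by
    have hcA : ContinuousOn A (Icc am bp) := fun q hq => (hA q hq).continuousAt.continuousWithinAt
    have hcB : ContinuousOn Bc (Icc am bp) := fun q hq => (hBc q hq).continuousAt.continuousWithinAt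
    exact hcA.div (hcA.add hcB) fun q hq => (hpos q hq).ne'
  have hIA : IntervalIntegrable (fun q => A' q * (1 - A q / (A q + Bc q)) ^ 2) volume am bp :=
    (hA'.mul ((continuousOn_const.sub hT).pow 2)).intervalIntegrable_of_Icc hab
  have hIB : IntervalIntegrable (fun q => Bc' q * (A q / (A q + Bc q)) ^ 2) volume am bp :=
    (hBc'.mul (hT.pow 2)).intervalIntegrable_of_Icc hab
  have hF : ∀ q ∈ uIcc am bp, HasDerivAt (fun y => A y * Bc y / (A y + Bc y))
      (A' q * (1 - A q / (A q + Bc q)) ^ 2 + Bc' q * (A q / (A q + Bc q)) ^ 2) q := by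
    rw [uIcc_of_le hab]
    exact fun q hq => (hA q hq).mul_div_add (hBc q hq) (hpos q hq).ne'
  have hFTC := integral_eq_sub_of_hasDerivAt hF (hIA.add hIB)
  rw [integral_add hIA hIB] at hFTC
  simp only [hA0, hB0, zero_mul, mul_zero, zero_div, sub_zero] at hFTC
  linarith
end
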